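/- Every palindromic factor of the Rudin–Shapiro word u_rs has length at most 14, and u_rs has a palindromic factor of length exactly 14. -/
import Mathlib


/-- Prefix `u[0..n-1]` of the infinite word `u`. -/
def wordPrefix {A : Type*} (u : ℕ → A) (n : ℕ) : List A :=
  List.ofFn (fun i : Fin n => u i)

/-- Factor `u[i..i+ℓ-1]` of the infinite word `u`. -/
def wordFactor {A : Type*} (u : ℕ → A) (i ℓ : ℕ) : List A :=
  List.ofFn (fun j : Fin ℓ => u (i + j))

/-- A palindrome is a word equal to its reversal. -/
def IsPalindrome {A : Type*} (w : List A) : Prop := w.reverse = w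

/-- `w` is a concatenation of `k` nonempty palindromes. -/
def IsPalConcat {A : Type*} (w : List A) (k : ℕ) : Prop :=
  ∃ ps : List (List A), ps.length = k ∧ (∀ p ∈ ps, p ≠ [] ∧ IsPalindrome p) ∧ ps.flatten = w

/-- Prefix palindromic length: the least number of nonempty palindromes whose
concatenation is the prefix of length `n` of `u` (`PPL u 0 = 0`). -/
noncomputable def PPL {A : Type*} (u : ℕ → A) (n : ℕ) : ℕ :=
  sInf {k | IsPalConcat (wordPrefix u n) k}

/-- The PPL-difference sequence `d_u(n) = PPL_u(n+1) - PPL_u(n)`. -/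
noncomputable def PPLdiff {A : Type*} (u : ℕ → A) (n : ℕ) : ℤ :=
  (PPL u (n + 1) : ℤ) - (PPL u n : ℤ)

/-- The fixed point starting with `a` of the 2-uniform morphism sending each letter
`x` to the two-letter word `mu x` (assuming `(mu a).1 = a`):
the unique infinite word `w` with `w 0 = a`, `w (2n) = (mu (w n)).1`,
`w (2n+1) = (mu (w n)).2`. -/
def fixedPoint2 {A : Type*} (mu : A → A × A) (a : A) : ℕ → A
  | 0 => a
  | n + 1 =>
    if (n + 1) % 2 = 0 then (mu (fixedPoint2 mu a ((n + 1) / 2))).1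
    else (mu (fixedPoint2 mu a ((n + 1) / 2))).2
termination_by n => n
decreasing_by all_goals exact Nat.div_lt_self (Nat.succ_pos n) one_lt_two

/-- The morphism `φ_rs` on `{a, b, c, d}` (encoded as `0, 1, 2, 3`):
`a ↦ ab`, `b ↦ ac`, `c ↦ db`, `d ↦ dc`. -/
def phiRS : Fin 4 → Fin 4 × Fin 4
  | 0 => (0, 1)
  | 1 => (0, 2)
  | 2 => (3, 1)
  | 3 => (3, 2)

/-- The fixed point `v = φ_rs^ω(a)`. -/
def vRS : ℕ → Fin 4 := fixedPoint2 phiRS 0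

/-- The coding `ψ : a, b ↦ 0`, `c, d ↦ 1`. -/
def codingRS (x : Fin 4) : Fin 2 := if (x : ℕ) < 2 then 0 else 1

/-- The Rudin–Shapiro word `u_rs = ψ(φ_rs^ω(a)) = 0001001000011101⋯`. -/
def rudinShapiro (n : ℕ) : Fin 2 := codingRS (vRS n)

/-! ### Auxiliary lemmas -/

lemma v_rec (n : ℕ) : vRS (n + 1) =
    if (n + 1) % 2 = 0 then (phiRS (vRS ((n + 1) / 2))).1
    else (phiRS (vRS ((n + 1) / 2))).2 := by
  rw [vRS, fixedPoint2]

lemma v_even (n : ℕ) : vRS (2 * n) = (phiRS (vRS n)).1 := by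
  match n with
  | 0 =>
    have h0 : vRS 0 = 0 := by rw [vRS, fixedPoint2]
    show vRS 0 = _
    rw [h0]; decide
  | m + 1 =>
    rw [show 2 * (m + 1) = (2 * m + 1) + 1 by omega, v_rec,
      if_pos (by omega : (2 * m + 1 + 1) % 2 = 0),
      show (2 * m + 1 + 1) / 2 = m + 1 by omega]

lemma v_odd (n : ℕ) : vRS (2 * n + 1) = (phiRS (vRS n)).2 := by
  rw [show 2 * n + 1 = (2 * n) + 1 from rfl, v_rec,
    if_neg (by omega : ¬ (2 * n + 1) % 2 = 0),
    show (2 * n + 1) / 2 = n by omega]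

def QRS (x y : Fin 4) : Prop := x ≠ y ∧ (x : ℕ) + (y : ℕ) ≠ 3

instance (x y : Fin 4) : Decidable (QRS x y) := by unfold QRS; exact instDecidableAnd

lemma qstep1 : ∀ x : Fin 4, QRS (phiRS x).1 (phiRS x).2 := by decide

lemma qstep2 : ∀ x y : Fin 4, QRS x y → QRS (phiRS x).2 (phiRS y).1 := by decide

lemma pairQ : ∀ n, QRS (vRS n) (vRS (n + 1)) := by
  intro n
  induction n using Nat.strong_induction_on with
  | _ n ih =>
    rcases Nat.even_or_odd n with ⟨m, hm⟩ | ⟨m, hm⟩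
    · have h1 : vRS n = (phiRS (vRS m)).1 := by rw [show n = 2 * m by omega, v_even]
      have h2 : vRS (n + 1) = (phiRS (vRS m)).2 := by
        rw [show n + 1 = 2 * m + 1 by omega, v_odd]
      rw [h1, h2]; exact qstep1 _
    · have h1 : vRS n = (phiRS (vRS m)).2 := by rw [show n = 2 * m + 1 by omega, v_odd]
      have h2 : vRS (n + 1) = (phiRS (vRS (m + 1))).1 := by
        rw [show n + 1 = 2 * (m + 1) by omega, v_even]
      rw [h1, h2]
      exact qstep2 _ _ (ih m (by omega))

def expandRS (c : ℕ) (w : ℕ → Fin 4) : ℕ → Fin 4 := fun j =>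
  if (c + j) % 2 = 0 then (phiRS (w ((c + j) / 2))).1 else (phiRS (w ((c + j) / 2))).2

def baseRS (x y : Fin 4) : ℕ → Fin 4 := fun t => if t = 0 then x else y

lemma expandRS_spec (c : ℕ) (n : ℕ) (w : ℕ → Fin 4) (m m' : ℕ)
    (hm : (c + m') / 2 ≤ m) (hw : ∀ t ≤ m, w t = vRS (n + t)) :
    ∀ j ≤ m', expandRS c w j = vRS (2 * n + c + j) := by
  intro j hj
  have ht : (c + j) / 2 ≤ m := le_trans (Nat.div_le_div_right (by omega)) hm
  unfold expandRS
  rcases Nat.mod_two_eq_zero_or_one (c + j) with h | h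
  · rw [if_pos h, hw _ ht, show 2 * n + c + j = 2 * (n + (c + j) / 2) by omega, v_even]
  · rw [if_neg (by omega), hw _ ht,
      show 2 * n + c + j = 2 * (n + (c + j) / 2) + 1 by omega, v_odd]

lemma window_eq (i : ℕ) : ∀ j ≤ 15,
    expandRS (i % 2) (expandRS (i / 2 % 2) (expandRS (i / 2 / 2 % 2)
      (expandRS (i / 2 / 2 / 2 % 2)
        (baseRS (vRS (i / 2 / 2 / 2 / 2)) (vRS (i / 2 / 2 / 2 / 2 + 1)))))) j
      = vRS (i + j) := by
  have h4 : ∀ t ≤ 1, baseRS (vRS (i / 2 / 2 / 2 / 2)) (vRS (i / 2 / 2 / 2 / 2 + 1)) t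
      = vRS (i / 2 / 2 / 2 / 2 + t) := by
    intro t ht
    interval_cases t
    · simp [baseRS]
    · simp [baseRS]
  have h3 : ∀ t ≤ 2, expandRS (i / 2 / 2 / 2 % 2)
      (baseRS (vRS (i / 2 / 2 / 2 / 2)) (vRS (i / 2 / 2 / 2 / 2 + 1))) t
      = vRS (i / 2 / 2 / 2 + t) := by
    intro t ht
    rw [expandRS_spec _ _ _ 1 2 (by omega) h4 t ht,
      show 2 * (i / 2 / 2 / 2 / 2) + i / 2 / 2 / 2 % 2 + t = i / 2 / 2 / 2 + t by omega]
  have h2 : ∀ t ≤ 4, expandRS (i / 2 / 2 % 2) (expandRS (i / 2 / 2 / 2 % 2)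
      (baseRS (vRS (i / 2 / 2 / 2 / 2)) (vRS (i / 2 / 2 / 2 / 2 + 1)))) t
      = vRS (i / 2 / 2 + t) := by
    intro t ht
    rw [expandRS_spec _ _ _ 2 4 (by omega) h3 t ht,
      show 2 * (i / 2 / 2 / 2) + i / 2 / 2 % 2 + t = i / 2 / 2 + t by omega]
  have h1 : ∀ t ≤ 8, expandRS (i / 2 % 2) (expandRS (i / 2 / 2 % 2)
      (expandRS (i / 2 / 2 / 2 % 2)
        (baseRS (vRS (i / 2 / 2 / 2 / 2)) (vRS (i / 2 / 2 / 2 / 2 + 1))))) t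
      = vRS (i / 2 + t) := by
    intro t ht
    rw [expandRS_spec _ _ _ 4 8 (by omega) h2 t ht,
      show 2 * (i / 2 / 2) + i / 2 % 2 + t = i / 2 + t by omega]
  intro j hj
  rw [expandRS_spec _ _ _ 8 15 (by omega) h1 j hj,
    show 2 * (i / 2) + i % 2 + j = i + j by omega]

lemma core : ∀ x y : Fin 4, QRS x y → ∀ c1 c2 c3 c4 : Fin 2,
    (∃ j : Fin 15,
      codingRS (expandRS (c1 : ℕ) (expandRS (c2 : ℕ) (expandRS (c3 : ℕ)
        (expandRS (c4 : ℕ) (baseRS x y)))) (j : ℕ)) ≠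
      codingRS (expandRS (c1 : ℕ) (expandRS (c2 : ℕ) (expandRS (c3 : ℕ)
        (expandRS (c4 : ℕ) (baseRS x y)))) (14 - (j : ℕ)))) ∧
    (∃ j : Fin 16,
      codingRS (expandRS (c1 : ℕ) (expandRS (c2 : ℕ) (expandRS (c3 : ℕ)
        (expandRS (c4 : ℕ) (baseRS x y)))) (j : ℕ)) ≠
      codingRS (expandRS (c1 : ℕ) (expandRS (c2 : ℕ) (expandRS (c3 : ℕ)
        (expandRS (c4 : ℕ) (baseRS x y)))) (15 - (j : ℕ)))) := by
  decide

lemma pal_iff {A : Type*} (u : ℕ → A) (i ℓ : ℕ) :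
    IsPalindrome (wordFactor u i ℓ) ↔ ∀ j, j < ℓ → u (i + j) = u (i + (ℓ - 1 - j)) := by
  constructor
  · intro h j hj
    have hj1 : j < (wordFactor u i ℓ).reverse.length := by
      simp [wordFactor, hj]
    have h2 := List.getElem_of_eq h hj1
    rw [List.getElem_reverse] at h2
    simpa [wordFactor, List.getElem_ofFn] using h2.symm
  · intro h
    apply List.ext_getElem (by simp)
    intro j h1 h2
    have hj : j < ℓ := by simpa [wordFactor] using h2
    rw [List.getElem_reverse]
    simp only [wordFactor, List.getElem_ofFn, List.length_ofFn]
    exact (h j hj).symm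

lemma no_pal15 (i : ℕ) : ¬ IsPalindrome (wordFactor rudinShapiro i 15) := by
  intro hp
  rw [pal_iff] at hp
  obtain ⟨⟨j, hj⟩, hne⟩ := (core (vRS (i / 2 / 2 / 2 / 2)) (vRS (i / 2 / 2 / 2 / 2 + 1))
    (pairQ _) ⟨i % 2, by omega⟩ ⟨i / 2 % 2, by omega⟩ ⟨i / 2 / 2 % 2, by omega⟩
    ⟨i / 2 / 2 / 2 % 2, by omega⟩).1
  apply hne
  show codingRS _ = codingRS _
  rw [window_eq i j (by omega), window_eq i (14 - j) (by omega)]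
  have := hp j (by omega)
  rw [show 15 - 1 - j = 14 - j by omega] at this
  exact this

lemma no_pal16 (i : ℕ) : ¬ IsPalindrome (wordFactor rudinShapiro i 16) := by
  intro hp
  rw [pal_iff] at hp
  obtain ⟨⟨j, hj⟩, hne⟩ := (core (vRS (i / 2 / 2 / 2 / 2)) (vRS (i / 2 / 2 / 2 / 2 + 1))
    (pairQ _) ⟨i % 2, by omega⟩ ⟨i / 2 % 2, by omega⟩ ⟨i / 2 / 2 % 2, by omega⟩
    ⟨i / 2 / 2 / 2 % 2, by omega⟩).2
  apply hne
  show codingRS _ = codingRS _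
  rw [window_eq i j (by omega), window_eq i (15 - j) (by omega)]
  have := hp j (by omega)
  rw [show 16 - 1 - j = 15 - j by omega] at this
  exact this

lemma pal_shrink {A : Type*} (u : ℕ → A) (i ℓ : ℕ)
    (h : IsPalindrome (wordFactor u i (ℓ + 2))) :
    IsPalindrome (wordFactor u (i + 1) ℓ) := by
  rw [pal_iff] at h ⊢
  intro j hj
  have := h (j + 1) (by omega)
  rw [show i + (j + 1) = i + 1 + j by omega,
    show i + (ℓ + 2 - 1 - (j + 1)) = i + 1 + (ℓ - 1 - j) by omega] at this
  exact this

lemma no_big : ∀ ℓ, 15 ≤ ℓ → ∀ i, ¬ IsPalindrome (wordFactor rudinShapiro i ℓ) := by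
  intro ℓ
  induction ℓ using Nat.strong_induction_on with
  | _ ℓ ih =>
    intro hℓ i hp
    rcases Nat.lt_or_ge ℓ 17 with h | h
    · interval_cases ℓ
      · exact no_pal15 i hp
      · exact no_pal16 i hp
    · have heq : ℓ - 2 + 2 = ℓ := by omega
      exact ih (ℓ - 2) (by omega) (by omega) (i + 1)
        (pal_shrink rudinShapiro i (ℓ - 2) (by rw [heq]; exact hp))


lemma v0 : vRS 0 = 0 := by
  rw [vRS, fixedPoint2]

lemma v1 : vRS 1 = 1 := by
  show vRS (2 * 0 + 1) = _; rw [v_odd, v0]; decide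

lemma v2 : vRS 2 = 0 := by
  show vRS (2 * 1) = _; rw [v_even, v1]; decide

lemma v3 : vRS 3 = 2 := by
  show vRS (2 * 1 + 1) = _; rw [v_odd, v1]; decide

lemma v4 : vRS 4 = 0 := by
  show vRS (2 * 2) = _; rw [v_even, v2]; decide

lemma v5 : vRS 5 = 1 := by
  show vRS (2 * 2 + 1) = _; rw [v_odd, v2]; decide

lemma v7 : vRS 7 = 1 := by
  show vRS (2 * 3 + 1) = _; rw [v_odd, v3]; decide

lemma v8 : vRS 8 = 0 := by
  show vRS (2 * 4) = _; rw [v_even, v4]; decide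

lemma v9 : vRS 9 = 1 := by
  show vRS (2 * 4 + 1) = _; rw [v_odd, v4]; decide

lemma v10 : vRS 10 = 0 := by
  show vRS (2 * 5) = _; rw [v_even, v5]; decide

lemma v15 : vRS 15 = 2 := by
  show vRS (2 * 7 + 1) = _; rw [v_odd, v7]; decide

lemma v16 : vRS 16 = 0 := by
  show vRS (2 * 8) = _; rw [v_even, v8]; decide

lemma v17 : vRS 17 = 1 := by
  show vRS (2 * 8 + 1) = _; rw [v_odd, v8]; decide

lemma v18 : vRS 18 = 0 := by
  show vRS (2 * 9) = _; rw [v_even, v9]; decide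

lemma v19 : vRS 19 = 2 := by
  show vRS (2 * 9 + 1) = _; rw [v_odd, v9]; decide

lemma v20 : vRS 20 = 0 := by
  show vRS (2 * 10) = _; rw [v_even, v10]; decide

lemma v21 : vRS 21 = 1 := by
  show vRS (2 * 10 + 1) = _; rw [v_odd, v10]; decide

lemma v30 : vRS 30 = 3 := by
  show vRS (2 * 15) = _; rw [v_even, v15]; decide

lemma v31 : vRS 31 = 1 := by
  show vRS (2 * 15 + 1) = _; rw [v_odd, v15]; decide

lemma v32 : vRS 32 = 0 := by
  show vRS (2 * 16) = _; rw [v_even, v16]; decide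

lemma v33 : vRS 33 = 1 := by
  show vRS (2 * 16 + 1) = _; rw [v_odd, v16]; decide

lemma v34 : vRS 34 = 0 := by
  show vRS (2 * 17) = _; rw [v_even, v17]; decide

lemma v35 : vRS 35 = 2 := by
  show vRS (2 * 17 + 1) = _; rw [v_odd, v17]; decide

lemma v36 : vRS 36 = 0 := by
  show vRS (2 * 18) = _; rw [v_even, v18]; decide

lemma v37 : vRS 37 = 1 := by
  show vRS (2 * 18 + 1) = _; rw [v_odd, v18]; decide

lemma v38 : vRS 38 = 3 := by
  show vRS (2 * 19) = _; rw [v_even, v19]; decide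

lemma v39 : vRS 39 = 1 := by
  show vRS (2 * 19 + 1) = _; rw [v_odd, v19]; decide

lemma v40 : vRS 40 = 0 := by
  show vRS (2 * 20) = _; rw [v_even, v20]; decide

lemma v41 : vRS 41 = 1 := by
  show vRS (2 * 20 + 1) = _; rw [v_odd, v20]; decide

lemma v42 : vRS 42 = 0 := by
  show vRS (2 * 21) = _; rw [v_even, v21]; decide

lemma v43 : vRS 43 = 2 := by
  show vRS (2 * 21 + 1) = _; rw [v_odd, v21]; decide

lemma u30 : rudinShapiro 30 = 1 := by
  unfold rudinShapiro; rw [v30]; decide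

lemma u31 : rudinShapiro 31 = 0 := by
  unfold rudinShapiro; rw [v31]; decide

lemma u32 : rudinShapiro 32 = 0 := by
  unfold rudinShapiro; rw [v32]; decide

lemma u33 : rudinShapiro 33 = 0 := by
  unfold rudinShapiro; rw [v33]; decide

lemma u34 : rudinShapiro 34 = 0 := by
  unfold rudinShapiro; rw [v34]; decide

lemma u35 : rudinShapiro 35 = 1 := by
  unfold rudinShapiro; rw [v35]; decide

lemma u36 : rudinShapiro 36 = 0 := by
  unfold rudinShapiro; rw [v36]; decide

lemma u37 : rudinShapiro 37 = 0 := by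
  unfold rudinShapiro; rw [v37]; decide

lemma u38 : rudinShapiro 38 = 1 := by
  unfold rudinShapiro; rw [v38]; decide

lemma u39 : rudinShapiro 39 = 0 := by
  unfold rudinShapiro; rw [v39]; decide

lemma u40 : rudinShapiro 40 = 0 := by
  unfold rudinShapiro; rw [v40]; decide

lemma u41 : rudinShapiro 41 = 0 := by
  unfold rudinShapiro; rw [v41]; decide

lemma u42 : rudinShapiro 42 = 0 := by
  unfold rudinShapiro; rw [v42]; decide

lemma u43 : rudinShapiro 43 = 1 := by
  unfold rudinShapiro; rw [v43]; decide


/-- Every palindromic factor of the Rudin–Shapiro word has length at most 14, and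
there is a palindromic factor of length exactly 14. -/
theorem rudinShapiro_palindromes :
    (∀ i ℓ : ℕ, 1 ≤ ℓ → IsPalindrome (wordFactor rudinShapiro i ℓ) → ℓ ≤ 14) ∧
      (∃ i : ℕ, IsPalindrome (wordFactor rudinShapiro i 14)) := by
  constructor
  · intro i ℓ h1 hp
    by_contra hc
    exact no_big ℓ (by omega) i hp
  · refine ⟨30, ?_⟩
    rw [pal_iff]
    intro j hj
    interval_cases j <;>
      norm_num [u30, u31, u32, u33, u34, u35, u36, u37, u38, u39, u40, u41, u42, u43]
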